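/- arXiv:2010.03111 — 2 statements merged into one kernel-verified Lean document; each statement's English description precedes it below -/
import Mathlib

section
/- The function V is convex on ℝ. -/
/-- The DWD loss function. -/
noncomputable def V (u : ℝ) : ℝ := if u ≤ 1/2 then 1 - u else 1/(4*u)

/-!
`V` is the pointwise supremum of affine functions: on `u ≤ 1/2` it is the line `1 - u`, which
lies below `1/(4u)` for `u > 0` by AM-GM, and at `z > 1/2` the tangent `(2z - u)/(4z²)` of the
hyperbola `1/(4u)` lies below `V`. A function supported from below at every point by an affine
function is convex.
-/

theorem convexOn_univ_of_forall_exists_affine_le {𝕜 E β : Type*} [Ring 𝕜] [PartialOrder 𝕜]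
    [AddCommGroup E] [Module 𝕜 E] [AddCommGroup β] [PartialOrder β]
    [IsOrderedAddMonoid β] [Module 𝕜 β] [PosSMulMono 𝕜 β] {f : E → β}
    (h : ∀ z, ∃ g : E →ᵃ[𝕜] β, ⇑g ≤ f ∧ g z = f z) : ConvexOn 𝕜 Set.univ f := by
  refine ⟨convex_univ, fun x _ y _ a b ha hb hab => ?_⟩
  obtain ⟨g, hgf, hgz⟩ := h (a • x + b • y)
  calc f (a • x + b • y) = g (a • x + b • y) := hgz.symm
    _ = a • g x + b • g y := Convex.combo_affine_apply hab
    _ ≤ a • f x + b • f y := by gcongr <;> apply hgf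

noncomputable def affineLine (d c : ℝ) : ℝ →ᵃ[ℝ] ℝ :=
  (LinearMap.mulLeft ℝ d).toAffineMap + AffineMap.const ℝ ℝ c

@[simp]
theorem affineLine_apply (d c u : ℝ) : affineLine d c u = d * u + c := by
  simp [affineLine]

theorem one_sub_le_V (u : ℝ) : 1 - u ≤ V u := by
  unfold V
  split_ifs with hu
  · rfl
  · rw [le_div_iff₀ (by linarith)]
    nlinarith [sq_nonneg (2 * u - 1)]

theorem tangent_le_V {z : ℝ} (hz : 1 / 2 < z) (u : ℝ) : (2 * z - u) / (4 * z ^ 2) ≤ V u := by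
  unfold V
  split_ifs with hu
  · rw [div_le_iff₀ (by positivity)]
    nlinarith [mul_nonneg (by linarith : (0:ℝ) ≤ 1 / 2 - u) (by nlinarith : (0:ℝ) ≤ 4 * z ^ 2 - 1)]
  · rw [div_le_div_iff₀ (by positivity) (by linarith)]
    nlinarith [sq_nonneg (z - u)]

theorem exists_affine_le_V_eq (z : ℝ) : ∃ g : ℝ →ᵃ[ℝ] ℝ, ⇑g ≤ V ∧ g z = V z := by
  by_cases hz : z ≤ 1 / 2
  · refine ⟨affineLine (-1) 1, fun u => ?_, ?_⟩
    · simpa [neg_one_mul, neg_add_eq_sub] using one_sub_le_V u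
    · simp only [affineLine_apply, V, if_pos hz]
      ring
  · replace hz := not_le.1 hz
    refine ⟨affineLine (-1 / (4 * z ^ 2)) (1 / (2 * z)), fun u => ?_, ?_⟩
    · convert tangent_le_V hz u using 1
      simp only [affineLine_apply]
      field_simp
      ring
    · simp only [affineLine_apply, V, if_neg (not_le.2 hz)]
      field_simp
      ring

/-- `V` is convex on `ℝ`. -/
theorem dwd_loss_convex : ConvexOn ℝ Set.univ V :=
  convexOn_univ_of_forall_exists_affine_le exists_affine_le_V_eq
end

section
/- Let d, n be positive integers, X = [x_1, ..., x_n] with x_i ∈ ℝ^d, y ∈ {-1,1}^n with y_i = -1 for some i and y_j = 1 for some j, and let β ∈ ℝ^d be fixed. Then ∫_ℝ ∏_{i=1}^n exp(-V(y_i(β₀ + x_iᵀβ))) dβ₀ ≤ 2‖X‖₁‖β‖₁ + 2e, where ‖X‖₁ is the sum of the absolute values of all entries of X and ‖β‖₁ is the l₁ norm of β. -/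
/-!
Since `V u ≥ max 0 (-u)`, every factor `exp (-V u)` is at most `min 1 (exp u)`. With
`c = ‖X‖₁‖β‖₁ ≥ |⟪xᵢ, β⟫|`, a sample labelled `-1` bounds the integrand by `exp (c - β₀)`
and one labelled `1` by `exp (c + β₀)`, so the integrand is at most `min 1 (exp (c - |β₀|))`, whose
integral is exactly `2c + 2`.
-/

open MeasureTheory Set Real
open scoped RealInnerProductSpace

lemma V_nonneg (u : ℝ) : 0 ≤ V u := by
  unfold V
  split_ifs with h
  · linarith
  · exact div_nonneg zero_le_one (by linarith)

lemma neg_le_V (u : ℝ) : -u ≤ V u := by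
  unfold V
  split_ifs with h
  · linarith
  · have : 0 < 1 / (4 * u) := by push Not at h; positivity
    linarith

lemma exp_neg_V_le_one (u : ℝ) : exp (-V u) ≤ 1 :=
  exp_le_one_iff.2 (neg_nonpos.2 (V_nonneg u))

lemma abs_inner_le_sum_abs_mul_sum_abs {ι : Type*} [Fintype ι] (v w : EuclideanSpace ℝ ι) :
    |⟪v, w⟫| ≤ (∑ j, |v j|) * ∑ j, |w j| := by
  rw [PiLp.inner_apply, Finset.sum_mul]
  refine (Finset.abs_sum_le_sum_abs _ _).trans (Finset.sum_le_sum fun j _ => ?_)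
  rw [real_inner_eq_re_inner, RCLike.inner_apply, conj_trivial, RCLike.re_to_real, abs_mul,
    mul_comm]
  exact mul_le_mul_of_nonneg_left
    (Finset.single_le_sum (f := fun k => |w k|) (fun _ _ => abs_nonneg _) (Finset.mem_univ j))
    (abs_nonneg _)

lemma prod_le_of_nonneg_of_le_one {ι R : Type*} [Fintype ι] [CommSemiring R] [PartialOrder R]
    [IsOrderedRing R] {f : ι → R} (h0 : ∀ i, 0 ≤ f i) (h1 : ∀ i, f i ≤ 1) (i : ι) : ∏ j, f j ≤ f i := by
  simpa using Finset.prod_le_prod_of_subset_of_le_one (Finset.subset_univ {i})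
    (fun j _ => h0 j) (fun j _ _ => h1 j)

lemma prod_exp_neg_V_le_min_one_exp_sub_abs {ι : Type*} [Fintype ι] {y a : ι → ℝ} {c : ℝ}
    (hneg : ∃ i, y i = -1) (hpos : ∃ j, y j = 1) (ha : ∀ i, |a i| ≤ c) (t : ℝ) :
    ∏ i, exp (-V (y i * (t + a i))) ≤ min 1 (exp (c - |t|)) := by
  have h0 : ∀ i, 0 ≤ exp (-V (y i * (t + a i))) := fun _ => (exp_pos _).le
  have h1 : ∀ i, exp (-V (y i * (t + a i))) ≤ 1 := fun _ => exp_neg_V_le_one _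
  refine le_min (Finset.prod_le_one (fun i _ => h0 i) (fun i _ => h1 i)) ?_
  obtain ⟨i, hi⟩ := hneg
  obtain ⟨j, hj⟩ := hpos
  rcases le_total 0 t with ht | ht
  · refine (prod_le_of_nonneg_of_le_one h0 h1 i).trans (exp_le_exp.2 ?_)
    rw [hi, abs_of_nonneg ht]
    linarith [neg_le_V (-1 * (t + a i)), (abs_le.1 (ha i)).1]
  · refine (prod_le_of_nonneg_of_le_one h0 h1 j).trans (exp_le_exp.2 ?_)
    rw [hj, abs_of_nonpos ht]
    linarith [neg_le_V (1 * (t + a j)), (abs_le.1 (ha j)).2]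

lemma integrable_exp_neg_abs : Integrable fun t : ℝ => exp (-|t|) := by
  have hIic : IntegrableOn (fun t : ℝ => exp (-|t|)) (Iic 0) :=
    (integrableOn_exp_Iic 0).congr_fun
      (fun t ht => by rw [abs_of_nonpos ht, neg_neg]) measurableSet_Iic
  have hIoi : IntegrableOn (fun t : ℝ => exp (-|t|)) (Ioi 0) :=
    (exp_neg_integrableOn_Ioi 0 one_pos).congr_fun
      (fun t (ht : 0 < t) => by simp [abs_of_pos ht]) measurableSet_Ioi
  rw [← integrableOn_univ, ← Iic_union_Ioi (a := (0 : ℝ))]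
  exact hIic.union hIoi

lemma integrable_min_one_exp_sub_abs (c : ℝ) :
    Integrable fun t : ℝ => min 1 (exp (c - |t|)) := by
  refine (integrable_exp_neg_abs.const_mul (exp c)).mono'
    (by fun_prop : Measurable fun t : ℝ => min 1 (exp (c - |t|))).aestronglyMeasurable
    (ae_of_all _ fun t => ?_)
  rw [norm_of_nonneg (le_min zero_le_one (exp_pos _).le), ← exp_add, ← sub_eq_add_neg]
  exact min_le_right _ _

lemma setIntegral_Ioi_zero_min_one_exp_sub {c : ℝ} (hc : 0 ≤ c) :
    ∫ t in Ioi 0, min 1 (exp (c - t)) = c + 1 := by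
  have hIoc : EqOn (fun t => min 1 (exp (c - t))) (fun _ => 1) (Ioc 0 c) := fun t ht =>
    min_eq_left (one_le_exp (sub_nonneg.2 ht.2))
  have hIoi : EqOn (fun t => min 1 (exp (c - t))) (fun t => exp c * exp (-t)) (Ioi c) :=
    fun t ht => by
      dsimp only
      rw [min_eq_right (exp_le_one_iff.2 (sub_nonpos.2 (le_of_lt ht))), ← exp_add,
        sub_eq_add_neg]
  have hintIoc : IntegrableOn (fun t => min 1 (exp (c - t))) (Ioc 0 c) :=
    (integrableOn_const (by simp)).congr_fun hIoc.symm measurableSet_Ioc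
  have hintIoi : IntegrableOn (fun t => min 1 (exp (c - t))) (Ioi c) :=
    IntegrableOn.congr_fun ((exp_neg_integrableOn_Ioi c one_pos).const_mul (exp c))
      (fun t ht => by simp [hIoi ht]) measurableSet_Ioi
  rw [← Ioc_union_Ioi_eq_Ioi hc, setIntegral_union (Ioc_disjoint_Ioi le_rfl) measurableSet_Ioi
    hintIoc hintIoi, setIntegral_congr_fun measurableSet_Ioc hIoc,
    setIntegral_congr_fun measurableSet_Ioi hIoi, integral_const_mul, integral_exp_neg_Ioi,
    ← exp_add, add_neg_cancel, exp_zero]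
  simp [hc]

lemma integral_min_one_exp_sub_abs {c : ℝ} (hc : 0 ≤ c) :
    ∫ t, min 1 (exp (c - |t|)) = 2 * c + 2 := by
  rw [integral_comp_abs (f := fun s => min 1 (exp (c - s))),
    setIntegral_Ioi_zero_min_one_exp_sub hc]
  ring

theorem dwd_intercept_integral_bound_general (d n : ℕ)
    (x : Fin n → EuclideanSpace ℝ (Fin d))
    (y : Fin n → ℝ)
    (hneg : ∃ i, y i = -1) (hpos : ∃ j, y j = 1)
    (β : EuclideanSpace ℝ (Fin d)) :
    (∫ β₀ : ℝ, ∏ i, Real.exp (-V (y i * (β₀ + ⟪x i, β⟫))))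
      ≤ 2 * (∑ i, ∑ j, |x i j|) * (∑ j, |β j|) + 2 * Real.exp 1 := by
  set c := (∑ i, ∑ j, |x i j|) * ∑ j, |β j|
  have hc : 0 ≤ c := by positivity
  have hinner : ∀ i, |⟪x i, β⟫| ≤ c := fun i =>
    (abs_inner_le_sum_abs_mul_sum_abs (x i) β).trans <| mul_le_mul_of_nonneg_right
      (Finset.single_le_sum (f := fun k => ∑ j, |x k j|) (fun _ _ => by positivity)
        (Finset.mem_univ i)) (by positivity)
  calc (∫ β₀ : ℝ, ∏ i, exp (-V (y i * (β₀ + ⟪x i, β⟫))))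
      ≤ ∫ t, min 1 (exp (c - |t|)) :=
        integral_mono_of_nonneg
          (ae_of_all _ fun _ => Finset.prod_nonneg fun _ _ => (exp_pos _).le)
          (integrable_min_one_exp_sub_abs c)
          (ae_of_all _ (prod_exp_neg_V_le_min_one_exp_sub_abs hneg hpos hinner))
    _ = 2 * c + 2 := integral_min_one_exp_sub_abs hc
    _ ≤ 2 * c + 2 * exp 1 := by linarith [one_le_exp zero_le_one]
    _ = _ := by ring

/-- for fixed `β ∈ ℝ^d`, the integral over the intercept of the
likelihood term is bounded: `∫ ∏ᵢ exp(-V(yᵢ(β₀ + xᵢᵀβ))) dβ₀ ≤ 2‖X‖₁‖β‖₁ + 2e`,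
where `‖X‖₁` is the sum of the absolute values of the entries of `X` and
`‖β‖₁` is the `l₁` norm of `β`. -/
theorem dwd_intercept_integral_bound (d n : ℕ) (hd : 0 < d) (hn : 0 < n)
    (x : Fin n → EuclideanSpace ℝ (Fin d))
    (y : Fin n → ℝ) (hy : ∀ i, y i = -1 ∨ y i = 1)
    (hneg : ∃ i, y i = -1) (hpos : ∃ j, y j = 1)
    (β : EuclideanSpace ℝ (Fin d)) :
    (∫ β₀ : ℝ, ∏ i, Real.exp (-V (y i * (β₀ + ⟪x i, β⟫))))
      ≤ 2 * (∑ i, ∑ j, |x i j|) * (∑ j, |β j|) + 2 * Real.exp 1 :=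
  dwd_intercept_integral_bound_general d n x y hneg hpos β
end
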